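/- In the directed half-plane lattice with i.i.d. non-atomic edge weights of mean 1, there exists a constant κ > 0 such that, writing W_n = d̂_ω((k_n, n), ∂Ĥ) for the directed first-passage time from any chosen vertex on level n to the bottom boundary, lim_{n→∞} P[W_n < (1−κ)n] = 1. -/

import Mathlib

/-! The passage time from `(k, n)` is at most the weight of a path that stays within distance
one of the column of `k` and returns to it every two levels, choosing in each such cell of height
two the cheaper of its right descent and the mirror-image left one (plus one edge when `n` is
odd). The law of the weight field is a product measure, hence invariant under translations and
reflection, so the cell times are i.i.d.; their mean `M` is `< 2`, because the minimum of two
independent copies of a non-atomic variable has strictly smaller mean than either. The law of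
large numbers then keeps the `n / 2` cell times below `(M + 2) / 2 · n / 2 < (1 - κ) n` with
probability tending to one, uniformly in `k`. -/

open MeasureTheory ProbabilityTheory Filter

/-- Edges of the directed half-plane lattice `Ĥ`, indexed by their lower
endpoint `v` together with a Boolean which is `true` when the upper endpoint is
`v + (1,1)` and `false` when it is `v + (-1,1)`; the edge points downwards. -/
abbrev DirHPEdge := (ℤ × ℤ) × Bool

/-- Total weight of the directed path which visits the vertex `(p j, j)` on
level `j` for `0 ≤ j ≤ n`, descending from level `n` to level `0`. -/
def dirWt (W : DirHPEdge → ℝ) (p : ℕ → ℤ) (n : ℕ) : ℝ :=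
  ∑ j ∈ Finset.range n, W ((p j, (j : ℤ)), decide (p (j + 1) = p j + 1))

/-- The directed first-passage time `d̂_ω((x,n), ∂Ĥ)` from the vertex `(x,n)`
to the bottom boundary `∂Ĥ = (2ℤ) × {0}`: the infimum of path weights over all
directed paths descending from `(x, n)` to level `0`. -/
noncomputable def bdryTime (W : DirHPEdge → ℝ) (x : ℤ) (n : ℕ) : ℝ :=
  sInf {r : ℝ | ∃ q : ℕ → ℤ, q n = x ∧
    (∀ j < n, q (j + 1) = q j + 1 ∨ q (j + 1) = q j - 1) ∧
    r = dirWt W q n}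

open scoped Topology

namespace ProbabilityTheory

variable {Ω ι β γ : Type*} {mΩ : MeasurableSpace Ω} {P : Measure Ω}
  [MeasurableSpace β] {X : ι → Ω → β}

theorem iIndepFun.identDistrib_reindex (hmeas : ∀ i, Measurable (X i)) (hindep : iIndepFun X P)
    {f : ι → ι} (hf : f.Injective) (hlaw : ∀ i, P.map (X (f i)) = P.map (X i)) :
    IdentDistrib (fun ω i ↦ X (f i) ω) (fun ω i ↦ X i ω) P P where
  aemeasurable_fst := (measurable_pi_lambda _ fun i ↦ hmeas (f i)).aemeasurable
  aemeasurable_snd := (measurable_pi_lambda _ hmeas).aemeasurable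
  map_eq := by
    rw [(hindep.precomp hf).map_fun_eq_infinitePi_map (fun i ↦ hmeas (f i)),
      hindep.map_fun_eq_infinitePi_map hmeas]
    simp only [hlaw]

theorem iIndepFun.indepFun_of_dependsOn [DecidableEq ι] [Nonempty β] [MeasurableSpace γ]
    (hmeas : ∀ i, Measurable (X i)) (hindep : iIndepFun X P) {S T : Finset ι}
    (hST : Disjoint S T) {F G : (ι → β) → γ} (hF : Measurable F) (hG : Measurable G)
    (hFS : DependsOn F S) (hGT : DependsOn G T) :
    IndepFun (fun ω ↦ F (X · ω)) (fun ω ↦ G (X · ω)) P := by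
  let x₀ : ι → β := fun _ ↦ Classical.arbitrary β
  have hFS' : (fun ω ↦ F (X · ω)) =
      (F ∘ Function.updateFinset x₀ S) ∘ fun ω (i : S) ↦ X i ω := by
    ext ω; exact hFS fun i hi ↦ by simp [Function.updateFinset, Finset.mem_coe.mp hi]
  have hGT' : (fun ω ↦ G (X · ω)) =
      (G ∘ Function.updateFinset x₀ T) ∘ fun ω (i : T) ↦ X i ω := by
    ext ω; exact hGT fun i hi ↦ by simp [Function.updateFinset, Finset.mem_coe.mp hi]
  rw [hFS', hGT']
  exact (hindep.indepFun_finset S T hST hmeas).comp (hF.comp measurable_updateFinset)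
    (hG.comp measurable_updateFinset)

theorem IndepFun.measure_eq_comp_eq_zero [IsFiniteMeasure P] {X Y : Ω → ℝ}
    (hX : Measurable X) (hY : Measurable Y) (hXY : IndepFun X Y P)
    (hatom : ∀ a, P (X ⁻¹' {a}) = 0) {g : ℝ → ℝ} (hg : Measurable g) :
    P {ω | X ω = g (Y ω)} = 0 := by
  have hs : MeasurableSet {p : ℝ × ℝ | p.1 = g p.2} :=
    measurableSet_eq_fun measurable_fst (hg.comp measurable_snd)
  have hlaw := (indepFun_iff_map_prod_eq_prod_map_map hX.aemeasurable hY.aemeasurable).mp hXY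
  rw [show {ω | X ω = g (Y ω)} = (fun ω ↦ (X ω, Y ω)) ⁻¹' {p | p.1 = g p.2} from rfl,
    ← Measure.map_apply (hX.prodMk hY) hs, hlaw, Measure.prod_apply_symm hs]
  simp [Measure.map_apply hX (measurableSet_singleton _), hatom]

theorem integral_min_lt_of_indepFun [IsProbabilityMeasure P] {R L : Ω → ℝ} (hR : Measurable R)
    (hL : Measurable L) (hRL : IndepFun R L P) (hident : IdentDistrib R L P P)
    (hint : Integrable R P) (hatom : ∀ a, P (R ⁻¹' {a}) = 0) :
    ∫ ω, min (R ω) (L ω) ∂P < ∫ ω, R ω ∂P := by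
  have hLint : Integrable L P := hident.integrable_snd hint
  have hle : (fun ω ↦ min (R ω) (L ω)) ≤ᵐ[P] R := ae_of_all _ fun ω ↦ min_le_left _ _
  refine (integral_mono_ae (hint.inf hLint) hint hle).lt_of_ne fun heq ↦ ?_
  have hRL_le : R ≤ᵐ[P] L := ((integral_eq_iff_of_ae_le (hint.inf hLint) hint hle).mp heq).mono
    fun ω h ↦ min_eq_left_iff.mp h
  have hRL_eq : ∀ᵐ ω ∂P, R ω = L ω :=
    (integral_eq_iff_of_ae_le hint hLint hRL_le).mp hident.integral_eq
  have hdiag : P {ω | R ω = L ω} = 0 := hRL.measure_eq_comp_eq_zero hR hL hatom measurable_id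
  have := measure_univ_le_add_compl {ω | R ω = L ω} (μ := P)
  rw [ae_iff] at hRL_eq
  simp [hdiag, Set.compl_ofPred, hRL_eq] at this

theorem tendsto_measure_sum_ge_mul [IsFiniteMeasure P] {Y : ℕ → Ω → ℝ}
    (hint : Integrable (Y 0) P) (hindep : Pairwise (Function.onFun (IndepFun · · P) Y))
    (hident : ∀ i, IdentDistrib (Y i) (Y 0) P P) {c : ℝ} (hc : P[Y 0] < c) :
    Tendsto (fun m : ℕ ↦ P {ω | c * m ≤ ∑ i ∈ Finset.range m, Y i ω}) atTop (𝓝 0) := by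
  have hmeas : ∀ m : ℕ, AEStronglyMeasurable (fun ω ↦ (∑ i ∈ Finset.range m, Y i ω) / m) P :=
    fun m ↦ ((Finset.aemeasurable_fun_sum _ fun i _ ↦
      (hident i).aemeasurable_fst).div_const _).aestronglyMeasurable
  have hlim := tendstoInMeasure_iff_dist.mp (tendstoInMeasure_of_tendsto_ae hmeas
    (strong_law_ae_real Y hint hindep hident)) (c - P[Y 0]) (sub_pos.mpr hc)
  refine tendsto_of_tendsto_of_tendsto_of_le_of_le' tendsto_const_nhds hlim
    (Eventually.of_forall fun _ ↦ zero_le) ?_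
  filter_upwards [eventually_gt_atTop 0] with m hm
  refine measure_mono fun ω hω ↦ ?_
  have hm' : (0 : ℝ) < m := Nat.cast_pos.mpr hm
  have : c ≤ (∑ i ∈ Finset.range m, Y i ω) / m := (le_div_iff₀ hm').mpr (by linarith [hω.out])
  show _ ≤ dist _ _
  rw [Real.dist_eq]
  exact (sub_le_sub_right this _).trans (le_abs_self _)

theorem tendsto_measure_one_of_tendsto_compl [IsProbabilityMeasure P] {α : Type*} {l : Filter α}
    {s : α → Set Ω} (h : Tendsto (fun n ↦ P (s n)ᶜ) l (𝓝 0)) :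
    Tendsto (fun n ↦ P (s n)) l (𝓝 1) := by
  have hlow : Tendsto (fun n ↦ 1 - P (s n)ᶜ) l (𝓝 1) := by
    simpa using ENNReal.Tendsto.sub tendsto_const_nhds h (.inl ENNReal.one_ne_top)
  refine tendsto_of_tendsto_of_tendsto_of_le_of_le hlow tendsto_const_nhds (fun n ↦ ?_)
    fun _ ↦ prob_le_one
  simpa [tsub_le_iff_right] using measure_univ_le_add_compl (s n) (μ := P)

end ProbabilityTheory

theorem MeasureTheory.tendsto_measure_Ici_atTop (ν : Measure ℝ) [IsFiniteMeasure ν] :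
    Tendsto (fun t ↦ ν (Set.Ici t)) atTop (𝓝 0) := by
  have hempty : ⋂ t : ℝ, Set.Ici t = ∅ :=
    Set.eq_empty_of_forall_notMem fun x hx ↦ absurd (Set.mem_iInter.mp hx (x + 1)) (by simp)
  simpa [hempty, Function.comp_def] using tendsto_measure_iInter_atTop (μ := ν)
    (fun _ ↦ measurableSet_Ici.nullMeasurableSet) (fun _ _ h ↦ Set.Ici_subset_Ici.mpr h)
    ⟨0, measure_ne_top ν _⟩

theorem DependsOn.precomp {ι κ β γ : Type*} {F : (κ → β) → γ} {s : Set κ} (hF : DependsOn F s)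
    (g : κ → ι) : DependsOn (fun V : ι → β ↦ F (V ∘ g)) (g '' s) :=
  fun _ _ h ↦ hF fun i hi ↦ h (g i) ⟨i, hi, rfl⟩

def translateEdge (a : ℤ × ℤ) (e : DirHPEdge) : DirHPEdge := (e.1 + a, e.2)

def reflectEdge (e : DirHPEdge) : DirHPEdge := ((-e.1.1, e.1.2), !e.2)

theorem translateEdge_injective (a : ℤ × ℤ) : (translateEdge a).Injective := fun e e' h ↦ by
  simpa [translateEdge, Prod.ext_iff] using h

theorem reflectEdge_involutive : Function.Involutive reflectEdge := fun e ↦ by simp [reflectEdge]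

theorem translateEdge_translateEdge (a b : ℤ × ℤ) (e : DirHPEdge) :
    translateEdge a (translateEdge b e) = translateEdge (b + a) e := by
  simp [translateEdge, add_assoc]

/-- Weight of the descent `(0,2) → (1,1) → (0,0)`. -/
def rightDescent (V : DirHPEdge → ℝ) : ℝ := V ((1, 1), false) + V ((0, 0), true)

def cellTime (V : DirHPEdge → ℝ) : ℝ := min (rightDescent V) (rightDescent (V ∘ reflectEdge))

def corridorTime (V : DirHPEdge → ℝ) (m : ℕ) : ℝ :=
  ∑ i ∈ Finset.range m, cellTime (V ∘ translateEdge (0, 2 * i))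

def rightDescentEdges : Finset DirHPEdge := {((1, 1), false), ((0, 0), true)}

theorem dependsOn_rightDescent : DependsOn rightDescent rightDescentEdges := fun V V' h ↦ by
  simp [rightDescent, h ((1, 1), false) (by simp [rightDescentEdges]),
    h ((0, 0), true) (by simp [rightDescentEdges])]

def cellEdges : Finset DirHPEdge := rightDescentEdges ∪ rightDescentEdges.image reflectEdge

theorem dependsOn_cellTime : DependsOn cellTime cellEdges := fun V V' h ↦ by
  have hR := dependsOn_rightDescent fun e he ↦ h e (by simp [cellEdges, he])
  have hL := (dependsOn_rightDescent.precomp reflectEdge) fun e he ↦ h e <| by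
    rw [cellEdges, Finset.coe_union, Finset.coe_image]; exact .inr he
  simp only [cellTime, hR, hL]

theorem disjoint_cellEdges_image_translateEdge {i j : ℕ} (hij : i ≠ j) :
    Disjoint (cellEdges.image (translateEdge (0, 2 * i)))
      (cellEdges.image (translateEdge (0, 2 * j))) := by
  simpa [Finset.disjoint_left, cellEdges, rightDescentEdges, translateEdge, reflectEdge] using hij

theorem measurable_rightDescent : Measurable rightDescent := by
  unfold rightDescent; fun_prop

theorem measurable_cellTime : Measurable cellTime := by
  unfold cellTime rightDescent; fun_prop

theorem measurable_corridorTime (m : ℕ) : Measurable fun V ↦ corridorTime V m := by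
  unfold corridorTime cellTime rightDescent; fun_prop

theorem cellTime_nonneg {V : DirHPEdge → ℝ} (hV : ∀ e, 0 ≤ V e) : 0 ≤ cellTime V :=
  le_min (add_nonneg (hV _) (hV _)) (add_nonneg (hV _) (hV _))

theorem cellTime_comp_translateEdge (V : DirHPEdge → ℝ) (x y : ℤ) :
    cellTime (V ∘ translateEdge (x, y)) = min (V ((x + 1, y + 1), false) + V ((x, y), true))
      (V ((x - 1, y + 1), true) + V ((x, y), false)) := by
  simp [cellTime, rightDescent, translateEdge, reflectEdge, add_comm, sub_eq_add_neg]

section Deterministic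

variable {V : DirHPEdge → ℝ}

theorem bddBelow_pathWeights (hV : ∀ e, 0 ≤ V e) (x : ℤ) (n : ℕ) :
    BddBelow {r : ℝ | ∃ q : ℕ → ℤ, q n = x ∧
      (∀ j < n, q (j + 1) = q j + 1 ∨ q (j + 1) = q j - 1) ∧ r = dirWt V q n} :=
  ⟨0, by rintro _ ⟨q, -, -, rfl⟩; exact Finset.sum_nonneg fun j _ ↦ hV _⟩

theorem bdryTime_zero_nonpos (hV : ∀ e, 0 ≤ V e) (x : ℤ) : bdryTime V x 0 ≤ 0 :=
  csInf_le (bddBelow_pathWeights hV x 0) ⟨fun _ ↦ x, rfl, by simp, by simp [dirWt]⟩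

theorem bdryTime_succ_le (hV : ∀ e, 0 ≤ V e) {x y : ℤ} (hxy : x = y + 1 ∨ x = y - 1) (n : ℕ) :
    bdryTime V x (n + 1) ≤ V ((y, n), decide (x = y + 1)) + bdryTime V y n := by
  rw [← sub_le_iff_le_add']
  refine le_csInf ⟨_, fun j : ℕ ↦ y + j - n, by simp, fun j _ ↦ .inl (by push_cast; ring), rfl⟩ ?_
  rintro _ ⟨q, hqn, hq, rfl⟩
  rw [sub_le_iff_le_add']
  refine csInf_le (bddBelow_pathWeights hV x (n + 1))
    ⟨Function.update q (n + 1) x, by simp, fun j hj ↦ ?_, ?_⟩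
  · rcases Nat.lt_succ_iff_lt_or_eq.mp hj with hj | rfl
    · simpa [Function.update_of_ne (show j + 1 ≠ n + 1 by omega),
        Function.update_of_ne (show j ≠ n + 1 by omega)] using hq j hj
    · simpa [hqn] using hxy
  · rw [dirWt, dirWt, Finset.sum_range_succ, add_comm]
    simp only [Function.update_self, Function.update_of_ne (show n ≠ n + 1 by omega), hqn]
    congr 1
    refine Finset.sum_congr rfl fun j hj ↦ ?_
    rw [Finset.mem_range] at hj
    simp [Function.update_of_ne (show j + 1 ≠ n + 1 by omega),
      Function.update_of_ne (show j ≠ n + 1 by omega)]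

theorem bdryTime_add_two_le (hV : ∀ e, 0 ≤ V e) (x : ℤ) (n : ℕ) :
    bdryTime V x (n + 2) ≤ cellTime (V ∘ translateEdge (x, n)) + bdryTime V x n := by
  have hright := (bdryTime_succ_le hV (y := x + 1) (.inr (by ring)) (n + 1)).trans
    (add_le_add_right (bdryTime_succ_le hV (x := x + 1) (y := x) (.inl rfl) n) _)
  have hleft := (bdryTime_succ_le hV (y := x - 1) (.inl (by ring)) (n + 1)).trans
    (add_le_add_right (bdryTime_succ_le hV (x := x - 1) (y := x) (.inr rfl) n) _)
  simp only [show x ≠ x + 1 + 1 by omega, show x - 1 ≠ x + 1 by omega, decide_false,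
    decide_true, sub_add_cancel, Nat.cast_add, Nat.cast_one] at hright hleft
  rw [cellTime_comp_translateEdge, ← min_add_add_right]
  exact le_min (by linarith) (by linarith)

theorem bdryTime_two_mul_le (hV : ∀ e, 0 ≤ V e) (x : ℤ) (m : ℕ) :
    bdryTime V x (2 * m) ≤ corridorTime (V ∘ translateEdge (x, 0)) m := by
  induction m with
  | zero => simpa [corridorTime] using bdryTime_zero_nonpos hV x
  | succ m ih =>
    have hcell : V ∘ translateEdge (x, 0) ∘ translateEdge (0, 2 * (m : ℤ)) =
        V ∘ translateEdge (x, (2 * m : ℕ)) := by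
      ext e; simp [translateEdge_translateEdge]
    rw [show 2 * (m + 1) = 2 * m + 2 by ring, corridorTime, Finset.sum_range_succ, ← corridorTime,
      Function.comp_assoc, hcell]
    linarith [bdryTime_add_two_le hV x (2 * m)]

theorem bdryTime_le_corridorTime_add (hV : ∀ e, 0 ≤ V e) (x : ℤ) (n : ℕ) :
    bdryTime V x n ≤ corridorTime (V ∘ translateEdge (x + (n % 2 : ℕ), 0)) (n / 2) +
      V ((x + (n % 2 : ℕ), (2 * (n / 2) : ℕ)), false) := by
  obtain ⟨m, rfl | rfl⟩ := Nat.even_or_odd' n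
  · simpa using add_le_add (bdryTime_two_mul_le hV x m) (hV ((x, (2 * m : ℕ)), false))
  -- for odd `n` the first step goes right, to the top `(x + 1, n - 1)` of the corridor at `x + 1`
  · have htop := bdryTime_succ_le hV (x := x) (y := x + 1) (.inr (by ring)) (2 * m)
    simp only [show x ≠ x + 1 + 1 by omega, decide_false] at htop
    rw [show (2 * m + 1) % 2 = 1 by omega, show (2 * m + 1) / 2 = m by omega, Nat.cast_one]
    linarith [bdryTime_two_mul_le hV (x + 1) m]

theorem bdryTime_lt_of_corridorTime_lt (hV : ∀ e, 0 ≤ V e) {x : ℤ} {n : ℕ}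
    {κ : ℝ} (hκ : κ ≤ 1 / 2)
    (hcorr : corridorTime (V ∘ translateEdge (x + (n % 2 : ℕ), 0)) (n / 2) <
      2 * (1 - 2 * κ) * (n / 2 : ℕ))
    (htop : V ((x + (n % 2 : ℕ), (2 * (n / 2) : ℕ)), false) < κ * n) :
    bdryTime V x n < (1 - κ) * n := by
  have hhalf : 2 * ((n / 2 : ℕ) : ℝ) ≤ n := by exact_mod_cast Nat.mul_div_le n 2
  nlinarith [bdryTime_le_corridorTime_add hV x n]

end Deterministic

section WeightField

variable {Ω : Type*} [MeasureSpace Ω] {μ : Measure ℝ}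
  {W : DirHPEdge → Ω → ℝ}

theorem identDistrib_weights_reindex (hmeas : ∀ e, Measurable (W e)) (hindep : iIndepFun W ℙ)
    (hdist : ∀ e, Measure.map (W e) ℙ = μ) {f : DirHPEdge → DirHPEdge} (hf : f.Injective) :
    IdentDistrib (fun ω e ↦ W (f e) ω) (fun ω e ↦ W e ω) ℙ ℙ :=
  hindep.identDistrib_reindex hmeas hf fun e ↦ by rw [hdist, hdist]

theorem ae_nonneg_weights (hmeas : ∀ e, Measurable (W e)) (hdist : ∀ e, Measure.map (W e) ℙ = μ)
    (hsupp : μ (Set.Iio 0) = 0) : ∀ᵐ ω ∂ℙ, ∀ e, 0 ≤ W e ω := by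
  refine ae_all_iff.mpr fun e ↦ ?_
  have : ℙ (W e ⁻¹' Set.Iio 0) = 0 := by
    rw [← Measure.map_apply (hmeas e) measurableSet_Iio, hdist, hsupp]
  filter_upwards [measure_eq_zero_iff_ae_notMem.mp this] with ω hω
  simpa using hω

theorem integrable_weight (hmeas : ∀ e, Measurable (W e)) (hdist : ∀ e, Measure.map (W e) ℙ = μ)
    (hmean : ∫ t, t ∂μ = 1) (e : DirHPEdge) : Integrable (W e) ℙ := by
  have hμ : Integrable (fun t ↦ t) μ := by
    by_contra h
    simp [integral_undef h] at hmean
  rw [← hdist e] at hμ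
  exact (integrable_map_measure aestronglyMeasurable_id (hmeas e).aemeasurable).mp hμ

theorem integral_weight (hmeas : ∀ e, Measurable (W e)) (hdist : ∀ e, Measure.map (W e) ℙ = μ)
    (hmean : ∫ t, t ∂μ = 1) (e : DirHPEdge) : ∫ ω, W e ω = 1 := by
  rw [← hmean, ← hdist e, integral_map (f := fun t ↦ t) (hmeas e).aemeasurable
    aestronglyMeasurable_id]

theorem tendsto_measure_weight_ge_mul [IsFiniteMeasure μ] (hmeas : ∀ e, Measurable (W e))
    (hdist : ∀ e, Measure.map (W e) ℙ = μ) {κ : ℝ} (hκ : 0 < κ) (e : ℕ → DirHPEdge) :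
    Tendsto (fun n : ℕ ↦ ℙ {ω | κ * n ≤ W (e n) ω}) atTop (𝓝 0) := by
  have hlaw (n : ℕ) : ℙ {ω | κ * n ≤ W (e n) ω} = μ (Set.Ici (κ * n)) := by
    rw [← hdist (e n), Measure.map_apply (hmeas _) measurableSet_Ici]; rfl
  simp_rw [hlaw]
  exact (tendsto_measure_Ici_atTop μ).comp (tendsto_natCast_atTop_atTop.const_mul_atTop hκ)

theorem integrable_cellTime (hmeas : ∀ e, Measurable (W e)) (hdist : ∀ e, Measure.map (W e) ℙ = μ)
    (hsupp : μ (Set.Iio 0) = 0) (hmean : ∫ t, t ∂μ = 1) :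
    Integrable (fun ω ↦ cellTime (W · ω)) ℙ := by
  refine ((integrable_weight hmeas hdist hmean ((1, 1), false)).add
    (integrable_weight hmeas hdist hmean ((0, 0), true))).mono'
    (measurable_cellTime.comp (measurable_pi_lambda _ hmeas)).aestronglyMeasurable ?_
  filter_upwards [ae_nonneg_weights hmeas hdist hsupp] with ω hω
  rw [Real.norm_of_nonneg (cellTime_nonneg hω)]
  exact min_le_left _ _

end WeightField

section Corridor

variable {Ω : Type*} [MeasureSpace Ω] [IsProbabilityMeasure (ℙ : Measure Ω)] {μ : Measure ℝ}
  {W : DirHPEdge → Ω → ℝ}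

theorem integral_cellTime_lt_two (hmeas : ∀ e, Measurable (W e)) (hindep : iIndepFun W ℙ)
    (hdist : ∀ e, Measure.map (W e) ℙ = μ) (hatom : ∀ a : ℝ, μ {a} = 0)
    (hmean : ∫ t, t ∂μ = 1) : ∫ ω, cellTime (W · ω) < 2 := by
  set R : Ω → ℝ := fun ω ↦ rightDescent (W · ω)
  set L : Ω → ℝ := fun ω ↦ rightDescent ((W · ω) ∘ reflectEdge)
  have hR : Measurable R := measurable_rightDescent.comp (measurable_pi_lambda _ hmeas)
  have hL : Measurable L :=
    measurable_rightDescent.comp (measurable_pi_lambda _ fun e ↦ hmeas (reflectEdge e))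
  have hRL : IndepFun R L ℙ :=
    hindep.indepFun_of_dependsOn hmeas (T := rightDescentEdges.image reflectEdge) (by decide)
      measurable_rightDescent
      (measurable_rightDescent.comp (measurable_pi_lambda _ fun e ↦ measurable_pi_apply _))
      dependsOn_rightDescent
      (by rw [Finset.coe_image]; exact dependsOn_rightDescent.precomp reflectEdge)
  have hident : IdentDistrib R L ℙ ℙ :=
    ((identDistrib_weights_reindex hmeas hindep hdist reflectEdge_involutive.injective).comp
      measurable_rightDescent).symm
  have hRint : Integrable R ℙ :=
    (integrable_weight hmeas hdist hmean _).add (integrable_weight hmeas hdist hmean _)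
  have hatomR (a : ℝ) : ℙ (R ⁻¹' {a}) = 0 := by
    have hW (b : ℝ) : ℙ (W ((1, 1), false) ⁻¹' {b}) = 0 := by
      rw [← Measure.map_apply (hmeas _) (measurableSet_singleton b), hdist, hatom]
    have hindep₂ := hindep.indepFun (show ((1, 1), false) ≠ ((0, 0), true) by decide)
    convert hindep₂.measure_eq_comp_eq_zero (hmeas _) (hmeas _) hW (g := fun y ↦ a - y)
      (by fun_prop) using 2
    ext ω
    simp [R, rightDescent, eq_sub_iff_add_eq]
  calc ∫ ω, cellTime (W · ω) = ∫ ω, min (R ω) (L ω) := rfl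
    _ < ∫ ω, R ω := integral_min_lt_of_indepFun hR hL hRL hident hRint hatomR
    _ = 2 := by
      simp only [R, rightDescent]
      rw [integral_add (integrable_weight hmeas hdist hmean _)
        (integrable_weight hmeas hdist hmean _), integral_weight hmeas hdist hmean,
        integral_weight hmeas hdist hmean]
      norm_num

theorem tendsto_measure_corridorTime_ge (hmeas : ∀ e, Measurable (W e)) (hindep : iIndepFun W ℙ)
    (hdist : ∀ e, Measure.map (W e) ℙ = μ) (hsupp : μ (Set.Iio 0) = 0) (hmean : ∫ t, t ∂μ = 1)
    {c : ℝ} (hc : ∫ ω, cellTime (W · ω) < c) :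
    Tendsto (fun m : ℕ ↦ ℙ {ω | c * m ≤ corridorTime (W · ω) m}) atTop (𝓝 0) := by
  set Y : ℕ → Ω → ℝ := fun i ω ↦ cellTime ((W · ω) ∘ translateEdge (0, 2 * i))
  have hY (i : ℕ) : IdentDistrib (Y i) (fun ω ↦ cellTime (W · ω)) ℙ ℙ :=
    (identDistrib_weights_reindex hmeas hindep hdist (translateEdge_injective _)).comp
      measurable_cellTime
  have hindepY : Pairwise (Function.onFun (IndepFun · · ℙ) Y) := fun i j hij ↦
    hindep.indepFun_of_dependsOn hmeas (disjoint_cellEdges_image_translateEdge hij)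
      (measurable_cellTime.comp (measurable_pi_lambda _ fun e ↦ measurable_pi_apply _))
      (measurable_cellTime.comp (measurable_pi_lambda _ fun e ↦ measurable_pi_apply _))
      (by rw [Finset.coe_image]; exact dependsOn_cellTime.precomp _)
      (by rw [Finset.coe_image]; exact dependsOn_cellTime.precomp _)
  exact tendsto_measure_sum_ge_mul ((hY 0).integrable_iff.mpr
    (integrable_cellTime hmeas hdist hsupp hmean)) hindepY (fun i ↦ (hY i).trans (hY 0).symm)
    ((hY 0).integral_eq.trans_lt hc)

theorem tendsto_measure_corridorTime_comp_translateEdge_ge (hmeas : ∀ e, Measurable (W e))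
    (hindep : iIndepFun W ℙ) (hdist : ∀ e, Measure.map (W e) ℙ = μ) (hsupp : μ (Set.Iio 0) = 0)
    (hmean : ∫ t, t ∂μ = 1) {c : ℝ} (hc : ∫ ω, cellTime (W · ω) < c) {m : ℕ → ℕ}
    (hm : Tendsto m atTop atTop) (a : ℕ → ℤ × ℤ) :
    Tendsto (fun n ↦ ℙ {ω | c * m n ≤ corridorTime ((W · ω) ∘ translateEdge (a n)) (m n)})
      atTop (𝓝 0) := by
  have hshift (n : ℕ) : ℙ {ω | c * m n ≤ corridorTime ((W · ω) ∘ translateEdge (a n)) (m n)} =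
      ℙ {ω | c * m n ≤ corridorTime (W · ω) (m n)} :=
    ((identDistrib_weights_reindex hmeas hindep hdist (translateEdge_injective (a n))).comp
      (measurable_corridorTime (m n))).measure_mem_eq measurableSet_Ici
  simp_rw [hshift]
  exact (tendsto_measure_corridorTime_ge hmeas hindep hdist hsupp hmean hc).comp hm

end Corridor

/-- Proposition 3.4: in the directed half-plane lattice with i.i.d. non-atomic
nonnegative edge weights of mean `1`, there is a constant `κ > 0` such that for
any choice of vertices `(kₙ, n)` on level `n`, writing `Wₙ = d̂_ω((kₙ,n), ∂Ĥ)`,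
we have `P[Wₙ < (1-κ) n] → 1` as `n → ∞`. -/
theorem boundary_passage_time_sublinear
    {Ω : Type*} [MeasureSpace Ω] [IsProbabilityMeasure (ℙ : Measure Ω)]
    (μ : Measure ℝ) [IsProbabilityMeasure μ]
    (hatom : ∀ a : ℝ, μ {a} = 0)
    (hsupp : μ (Set.Iio 0) = 0)
    (hmean : ∫ t, t ∂μ = 1)
    (W : DirHPEdge → Ω → ℝ) (hmeas : ∀ e, Measurable (W e))
    (hindep : iIndepFun W ℙ)
    (hdist : ∀ e, Measure.map (W e) ℙ = μ) :
    ∃ κ : ℝ, 0 < κ ∧ ∀ kn : ℕ → ℤ, (∀ n : ℕ, Even (kn n + (n : ℤ))) →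
      Tendsto
        (fun n : ℕ => ℙ {ω | bdryTime (fun e => W e ω) (kn n) n < (1 - κ) * n})
        atTop (nhds 1) := by
  have hV := ae_nonneg_weights hmeas hdist hsupp
  set M := ∫ ω, cellTime (W · ω)
  have hM2 : M < 2 := integral_cellTime_lt_two hmeas hindep hdist hatom hmean
  have hM0 : 0 ≤ M := integral_nonneg_of_ae (hV.mono fun ω hω ↦ cellTime_nonneg hω)
  refine ⟨(2 - M) / 8, by linarith, fun kn _ ↦ tendsto_measure_one_of_tendsto_compl ?_⟩
  set κ := (2 - M) / 8 with hκ
  set y : ℕ → ℤ := fun n ↦ kn n + (n % 2 : ℕ)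
  -- the threshold `2 (1 - 2κ)` for the mean cell time is `(M + 2) / 2`, midway between `M` and `2`
  have hcorr := tendsto_measure_corridorTime_comp_translateEdge_ge hmeas hindep hdist hsupp hmean
    (show M < 2 * (1 - 2 * κ) by linarith) (Nat.tendsto_div_const_atTop two_ne_zero)
    fun n ↦ (y n, 0)
  have htop := tendsto_measure_weight_ge_mul hmeas hdist (show 0 < κ by linarith)
    fun n ↦ ((y n, (2 * (n / 2) : ℕ)), false)
  refine tendsto_of_tendsto_of_tendsto_of_le_of_le tendsto_const_nhds
    (add_zero (0 : ENNReal) ▸ hcorr.add htop) (fun _ ↦ zero_le) fun n ↦ ?_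
  refine (measure_mono_ae ?_).trans (measure_union_le _ _)
  filter_upwards [hV] with ω hω
  change ω ∉ _ → ω ∈ (_ : Set Ω) ∪ _
  contrapose!
  simp only [Set.mem_union, Set.mem_ofPred_eq, not_or, not_le]
  exact fun hgood ↦ bdryTime_lt_of_corridorTime_lt hω (by linarith) hgood.1 hgood.2
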